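/- Let α ∈ (1,∞) and let p_{Y|X} be a channel with p_{Y|X}(y|x) > 0 for all x, y. Consider F̃_α^{S3}(p_X, q̃_{X,Y}, r_{X|Y}) as a function of a strictly positive distribution p_X on 𝒳, a strictly positive joint distribution q̃_{X,Y} on 𝒳×𝒴, and a reverse channel r_{X|Y}. Then: (1) for fixed (p_X, q̃_{X,Y}), F̃_α^{S3} is maximized over reverse channels by r*_{X|Y}(x|y) := q̃_{X,Y}(x,y)/Σ_{x'} q̃_{X,Y}(x',y); (2) for fixed (q̃_{X,Y}, r_{X|Y}) with r_{X|Y} strictly positive, F̃_α^{S3} is maximized over strictly positive distributions p_X by p*_X(x) := Σ_y q̃_{X,Y}(x,y); (3) for fixed (p_X, r_{X|Y}) with r_{X|Y} strictly positive, F̃_α^{S3} is maximized over strictly positive joint distributions q̃_{X,Y} by q̃*_{X,Y}(x,y) := p_X(x)^{1/α} p_{Y|X}(y|x) r_{X|Y}(x|y)^{1−1/α} / Σ_{x',y'} p_X(x')^{1/α} p_{Y|X}(y'|x') r_{X|Y}(x'|y')^{1−1/α}. -/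

import Mathlib

/-- A probability mass function on a finite type. -/
def IsPMF {Z : Type*} [Fintype Z] (q : Z → ℝ) : Prop :=
  (∀ z, 0 ≤ q z) ∧ ∑ z, q z = 1

/-- Kullback--Leibler divergence (natural log). -/
noncomputable def klD {Z : Type*} [Fintype Z] (p q : Z → ℝ) : ℝ :=
  ∑ z, p z * Real.log (p z / q z)

/-- Extended-real logarithm: `elog 0 = ⊥` (i.e. `log 0 = −∞`). -/
noncomputable def elog (t : ℝ) : EReal :=
  if t = 0 then ⊥ else ((Real.log t : ℝ) : EReal)

/-- `F̃_α^{S3}(p_X, q̃_{X,Y}, r_{X|Y}) = (α/(1−α)) D(q̃_{X,Y} ‖ q̃_X p_{Y|X})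
  + Σ_{x,y} q̃_{X,Y}(x,y) log(r(x|y)/q̃_X(x)) + (1/(1−α)) D(q̃_X ‖ p_X)`,
valued in `ℝ ∪ {−∞}` (as `EReal`). -/
noncomputable def FtildeS3 {X Y : Type*} [Fintype X] [Fintype Y]
    (α : ℝ) (pYX : X → Y → ℝ) (pX : X → ℝ) (qt : X × Y → ℝ) (r : Y → X → ℝ) : EReal :=
  (((α / (1 - α)) * klD qt (fun z : X × Y => (∑ y, qt (z.1, y)) * pYX z.1 z.2) : ℝ) : EReal)
  + ∑ z : X × Y, ((qt z : ℝ) : EReal) * elog (r z.2 z.1 / ∑ y, qt (z.1, y))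
  + (((1 / (1 - α)) * klD (fun x => ∑ y, qt (x, y)) pX : ℝ) : EReal)

/-!
Each update is an instance of Gibbs' inequality `0 ≤ D(p ‖ q)`. Only the middle term depends
on `r`, and `Σ q̃ log r` falls short of its value at the posterior by `D(q̃ ‖ q̃_Y r) ≥ 0`
(if `r` vanishes somewhere the functional is `−∞`). Only the last term depends on `p_X`, and
`(1/(1−α)) D(q̃_X ‖ p_X) ≤ 0`, with equality at `p_X = q̃_X`. For fixed `(p_X, r)` the three
terms combine into `(α/(1−α)) D(q̃ ‖ w)` for the unnormalized weight
`w = p_X^{1/α} p_{Y|X} r^{1−1/α}`, and `D(q̃ ‖ w) = D(q̃ ‖ w / Σ w) − log Σ w` is minimal at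
`q̃ = w / Σ w`; the factor `α/(1−α)` is negative.
-/

open Finset Real

lemma EReal.coe_finset_sum {ι : Type*} (s : Finset ι) (f : ι → ℝ) :
    ((∑ i ∈ s, f i : ℝ) : EReal) = ∑ i ∈ s, (f i : EReal) :=
  map_sum (⟨⟨(↑), EReal.coe_zero⟩, EReal.coe_add⟩ : ℝ →+ EReal) f s

section KullbackLeibler

variable {Z : Type*} [Fintype Z]

lemma klD_self (p : Z → ℝ) : klD p p = 0 :=
  sum_eq_zero fun z _ => by by_cases h : p z = 0 <;> simp [h]

lemma sum_sub_sum_le_klD {p q : Z → ℝ} (hp : ∀ z, 0 ≤ p z) (hq : ∀ z, 0 < q z) :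
    ∑ z, p z - ∑ z, q z ≤ klD p q := by
  rw [← sum_sub_distrib]
  refine sum_le_sum fun z _ => ?_
  rcases (hp z).eq_or_lt with h | h
  · simp [← h, (hq z).le]
  · have hlog := log_le_sub_one_of_pos (div_pos (hq z) h)
    rw [← inv_div, log_inv]
    have hcancel : p z * (q z / p z - 1) = q z - p z := by field_simp
    nlinarith

lemma klD_nonneg {p q : Z → ℝ} (hp : ∀ z, 0 ≤ p z) (hq : ∀ z, 0 < q z)
    (hpq : ∑ z, q z ≤ ∑ z, p z) : 0 ≤ klD p q :=
  (sub_nonneg.2 hpq).trans (sum_sub_sum_le_klD hp hq)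

lemma klD_div_const {p g : Z → ℝ} (hp : ∑ z, p z = 1) (hg : ∀ z, g z ≠ 0) {c : ℝ}
    (hc : c ≠ 0) : klD p (fun z => g z / c) = klD p g + log c := by
  have hterm : ∀ z, p z * log (p z / (g z / c)) = p z * log (p z / g z) + p z * log c := by
    intro z
    by_cases h : p z = 0
    · simp [h]
    · rw [div_div_eq_mul_div, mul_div_right_comm, log_mul (div_ne_zero h (hg z)) hc, mul_add]
  simp only [klD, hterm, sum_add_distrib, ← sum_mul, hp, one_mul]

lemma klD_normalize_le {p g : Z → ℝ} (hp : IsPMF p) (hg : ∀ z, 0 < g z) :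
    klD (fun z => g z / ∑ w, g w) g ≤ klD p g := by
  obtain ⟨z₀, -, -⟩ := exists_ne_zero_of_sum_ne_zero (hp.2.symm ▸ one_ne_zero)
  have hS : 0 < ∑ w, g w := sum_pos (fun w _ => hg w) ⟨z₀, mem_univ z₀⟩
  have hnorm : ∑ z, g z / ∑ w, g w = 1 := by rw [← sum_div, div_self hS.ne']
  have hself := klD_div_const hnorm (fun z => (hg z).ne') hS.ne'
  have hshift := klD_div_const hp.2 (fun z => (hg z).ne') hS.ne'
  have hgibbs := klD_nonneg hp.1 (fun z => div_pos (hg z) hS) (by rw [hnorm, hp.2])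
  rw [klD_self] at hself
  linarith

end KullbackLeibler

section Channels

variable {X Y : Type*} [Fintype X] [Fintype Y]

lemma sum_mul_log_le_sum_mul_log_posterior [Nonempty X] {q : X × Y → ℝ} (hq : ∀ z, 0 < q z)
    {r : Y → X → ℝ} (hr : ∀ y, IsPMF (r y)) (hrpos : ∀ y x, 0 < r y x) :
    ∑ z, q z * log (r z.2 z.1) ≤ ∑ z, q z * log (q z / ∑ x', q (x', z.2)) := by
  have hqY : ∀ y, 0 < ∑ x', q (x', y) := fun y => sum_pos (fun x _ => hq _) univ_nonempty
  have hmass : ∑ z : X × Y, (∑ x', q (x', z.2)) * r z.2 z.1 = ∑ z, q z := by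
    simp only [Fintype.sum_prod_type_right (f := fun z : X × Y => (∑ x', q (x', z.2)) * r z.2 z.1),
      ← mul_sum, (hr _).2, mul_one, Fintype.sum_prod_type_right (f := q)]
  have hgibbs := klD_nonneg (fun z => (hq z).le) (fun z => mul_pos (hqY z.2) (hrpos _ _)) hmass.le
  rw [← sub_nonneg, ← sum_sub_distrib]
  refine hgibbs.trans_eq (sum_congr rfl fun z _ => ?_)
  rw [← mul_sub, ← log_div (div_pos (hq z) (hqY _)).ne' (hrpos _ _).ne', div_div]

end Channels

section TiltedWeight

variable {X Y : Type*} (α : ℝ) (pYX : X → Y → ℝ) (pX : X → ℝ) (r : Y → X → ℝ)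

noncomputable def tiltedWeight (z : X × Y) : ℝ :=
  pX z.1 ^ (1 / α) * pYX z.1 z.2 * r z.2 z.1 ^ (1 - 1 / α)

variable {pYX pX r} in
lemma tiltedWeight_pos (hpYX : ∀ x y, 0 < pYX x y) (hpX : ∀ x, 0 < pX x)
    (hr : ∀ y x, 0 < r y x) (z : X × Y) : 0 < tiltedWeight α pYX pX r z :=
  mul_pos (mul_pos (rpow_pos_of_pos (hpX _) _) (hpYX _ _)) (rpow_pos_of_pos (hr _ _) _)

end TiltedWeight

section FtildeS3

variable {X Y : Type*} [Fintype X] [Fintype Y] (α : ℝ) (pYX : X → Y → ℝ) (pX : X → ℝ)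
  (qt : X × Y → ℝ) (r : Y → X → ℝ)

noncomputable def FtildeS3Real : ℝ :=
  (α / (1 - α)) * klD qt (fun z : X × Y => (∑ y, qt (z.1, y)) * pYX z.1 z.2)
  + ∑ z : X × Y, qt z * log (r z.2 z.1 / ∑ y, qt (z.1, y))
  + (1 / (1 - α)) * klD (fun x => ∑ y, qt (x, y)) pX

lemma FtildeS3_eq_coe_FtildeS3Real [Nonempty Y] (hqt : ∀ z, 0 < qt z) (hr : ∀ y x, 0 < r y x) :
    FtildeS3 α pYX pX qt r = FtildeS3Real α pYX pX qt r := by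
  have helog : ∀ z : X × Y, elog (r z.2 z.1 / ∑ y, qt (z.1, y)) =
      (log (r z.2 z.1 / ∑ y, qt (z.1, y)) : EReal) := fun z =>
    if_neg (div_pos (hr _ _) (sum_pos (fun y _ => hqt _) univ_nonempty)).ne'
  simp only [FtildeS3, FtildeS3Real, helog, EReal.coe_add, EReal.coe_finset_sum, EReal.coe_mul]

lemma FtildeS3_eq_bot (hqt : ∀ z, 0 < qt z) {x : X} {y : Y} (h0 : r y x = 0) :
    FtildeS3 α pYX pX qt r = ⊥ := by
  classical
  have hterm : (qt (x, y) : EReal) * elog (r y x / ∑ y', qt (x, y')) = ⊥ := by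
    rw [elog, h0, zero_div, if_pos rfl]
    exact EReal.mul_bot_of_pos (EReal.coe_pos.2 (hqt _))
  rw [FtildeS3, ← add_sum_erase _ _ (mem_univ (x, y)), hterm, EReal.bot_add, EReal.add_bot,
    EReal.bot_add]

lemma FtildeS3Real_le_posterior [Nonempty X] [Nonempty Y] (hqt : ∀ z, 0 < qt z)
    (hr : ∀ y, IsPMF (r y)) (hrpos : ∀ y x, 0 < r y x) :
    FtildeS3Real α pYX pX qt r ≤
      FtildeS3Real α pYX pX qt (fun y x => qt (x, y) / ∑ x', qt (x', y)) := by
  have hqX : ∀ x, 0 < ∑ y, qt (x, y) := fun x => sum_pos (fun y _ => hqt _) univ_nonempty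
  have hqY : ∀ y, 0 < ∑ x, qt (x, y) := fun y => sum_pos (fun x _ => hqt _) univ_nonempty
  have hsplit : ∀ s : Y → X → ℝ, (∀ y x, 0 < s y x) →
      ∑ z : X × Y, qt z * log (s z.2 z.1 / ∑ y, qt (z.1, y)) =
        ∑ z : X × Y, qt z * log (s z.2 z.1) - ∑ z : X × Y, qt z * log (∑ y, qt (z.1, y)) := by
    intro s hs
    rw [← sum_sub_distrib]
    exact sum_congr rfl fun z _ => by rw [log_div (hs _ _).ne' (hqX _).ne', mul_sub]
  have hpost := hsplit (fun y x => qt (x, y) / ∑ x', qt (x', y)) fun y x => div_pos (hqt _) (hqY y)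
  simp only [Prod.mk.eta] at hpost
  rw [FtildeS3Real, FtildeS3Real, hsplit r hrpos, hpost]
  linarith [sum_mul_log_le_sum_mul_log_posterior hqt hr hrpos]

lemma FtildeS3Real_le_marginal (hα : 1 < α) (hqt : IsPMF qt) (hpX : IsPMF pX)
    (hpXpos : ∀ x, 0 < pX x) :
    FtildeS3Real α pYX pX qt r ≤ FtildeS3Real α pYX (fun x => ∑ y, qt (x, y)) qt r := by
  have hkl : 0 ≤ klD (fun x => ∑ y, qt (x, y)) pX :=
    klD_nonneg (fun x => sum_nonneg fun y _ => hqt.1 _) hpXpos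
      (by rw [hpX.2, ← Fintype.sum_prod_type, hqt.2])
  have hcoef : 1 / (1 - α) ≤ 0 := div_nonpos_of_nonneg_of_nonpos zero_le_one (by linarith)
  simp only [FtildeS3Real, klD_self, mul_zero]
  linarith [mul_nonpos_of_nonpos_of_nonneg hcoef hkl]

lemma FtildeS3Real_eq_mul_klD_tiltedWeight [Nonempty Y] (hα₀ : α ≠ 0) (hα₁ : α ≠ 1)
    (hpYX : ∀ x y, 0 < pYX x y) (hpX : ∀ x, 0 < pX x) (hr : ∀ y x, 0 < r y x)
    (hqt : ∀ z, 0 < qt z) :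
    FtildeS3Real α pYX pX qt r = α / (1 - α) * klD qt (tiltedWeight α pYX pX r) := by
  have h1α : (1 : ℝ) - α ≠ 0 := sub_ne_zero.2 hα₁.symm
  have hqX : ∀ x, 0 < ∑ y, qt (x, y) := fun x => sum_pos (fun y _ => hqt _) univ_nonempty
  have hlast : ∑ x, (∑ y, qt (x, y)) * log ((∑ y, qt (x, y)) / pX x) =
      ∑ z : X × Y, qt z * log ((∑ y, qt (z.1, y)) / pX z.1) := by
    rw [Fintype.sum_prod_type]
    exact sum_congr rfl fun x _ => sum_mul ..
  rw [FtildeS3Real, klD, klD, klD, hlast, mul_sum, mul_sum, mul_sum, ← sum_add_distrib,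
    ← sum_add_distrib]
  refine sum_congr rfl fun z _ => ?_
  -- the `log q̃_X` terms cancel: `-α/(1-α) - 1 + 1/(1-α) = 0`
  have hw := tiltedWeight_pos α hpYX hpX hr z
  rw [tiltedWeight] at hw ⊢
  rw [log_div (hqt z).ne' (mul_pos (hqX z.1) (hpYX z.1 z.2)).ne',
    log_mul (hqX z.1).ne' (hpYX z.1 z.2).ne', log_div (hr z.2 z.1).ne' (hqX z.1).ne',
    log_div (hqX z.1).ne' (hpX z.1).ne', log_div (hqt z).ne' hw.ne',
    log_mul (mul_pos (rpow_pos_of_pos (hpX _) _) (hpYX _ _)).ne'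
      (rpow_pos_of_pos (hr _ _) _).ne',
    log_mul (rpow_pos_of_pos (hpX _) _).ne' (hpYX _ _).ne', log_rpow (hpX _), log_rpow (hr _ _)]
  field_simp
  ring

lemma FtildeS3Real_le_tilted [Nonempty X] [Nonempty Y] (hα : 1 < α)
    (hpYX : ∀ x y, 0 < pYX x y) (hpX : ∀ x, 0 < pX x) (hr : ∀ y x, 0 < r y x)
    (hqt : IsPMF qt) (hqtpos : ∀ z, 0 < qt z) :
    FtildeS3Real α pYX pX qt r ≤
      FtildeS3Real α pYX pX
        (fun z => tiltedWeight α pYX pX r z / ∑ w, tiltedWeight α pYX pX r w) r := by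
  have hw := tiltedWeight_pos α hpYX hpX hr
  have hS : 0 < ∑ w, tiltedWeight α pYX pX r w := sum_pos (fun w _ => hw w) univ_nonempty
  have hcoef : α / (1 - α) ≤ 0 := div_nonpos_of_nonneg_of_nonpos (by linarith) (by linarith)
  rw [FtildeS3Real_eq_mul_klD_tiltedWeight _ _ _ _ _ (by linarith) hα.ne' hpYX hpX hr hqtpos,
    FtildeS3Real_eq_mul_klD_tiltedWeight _ _ _ _ _ (by linarith) hα.ne' hpYX hpX hr
      fun z => div_pos (hw z) hS]
  exact mul_le_mul_of_nonpos_left (klD_normalize_le hqt hw) hcoef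

end FtildeS3

theorem FtildeS3_max_updates_general {X Y : Type*} [Fintype X] [Fintype Y] [Nonempty X] [Nonempty Y]
    (α : ℝ) (hα : 1 < α)
    (pYX : X → Y → ℝ) (hpYXpos : ∀ x y, 0 < pYX x y) :
    (∀ pX : X → ℝ, IsPMF pX → (∀ x, 0 < pX x) →
      ∀ qt : X × Y → ℝ, IsPMF qt → (∀ z, 0 < qt z) →
      ∀ r : Y → X → ℝ, (∀ y, IsPMF (r y)) →
        FtildeS3 α pYX pX qt r ≤
        FtildeS3 α pYX pX qt (fun y x => qt (x, y) / ∑ x', qt (x', y))) ∧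
    (∀ qt : X × Y → ℝ, IsPMF qt → (∀ z, 0 < qt z) →
      ∀ r : Y → X → ℝ, (∀ y, IsPMF (r y)) → (∀ y x, 0 < r y x) →
      ∀ pX : X → ℝ, IsPMF pX → (∀ x, 0 < pX x) →
        FtildeS3 α pYX pX qt r ≤
        FtildeS3 α pYX (fun x => ∑ y, qt (x, y)) qt r) ∧
    (∀ pX : X → ℝ, IsPMF pX → (∀ x, 0 < pX x) →
      ∀ r : Y → X → ℝ, (∀ y, IsPMF (r y)) → (∀ y x, 0 < r y x) →
      ∀ qt : X × Y → ℝ, IsPMF qt → (∀ z, 0 < qt z) →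
        FtildeS3 α pYX pX qt r ≤
        FtildeS3 α pYX pX
          (fun z : X × Y =>
            pX z.1 ^ (1 / α) * pYX z.1 z.2 * r z.2 z.1 ^ (1 - 1 / α) /
              ∑ w : X × Y, pX w.1 ^ (1 / α) * pYX w.1 w.2 * r w.2 w.1 ^ (1 - 1 / α)) r) := by
  refine ⟨fun pX _ _ qt _ hqtpos r hr => ?_, fun qt hqt hqtpos r _ hrpos pX hpX hpXpos => ?_,
    fun pX _ hpXpos r _ hrpos qt hqt hqtpos => ?_⟩
  · by_cases hrpos : ∀ y x, 0 < r y x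
    · have hpost : ∀ y x, 0 < qt (x, y) / ∑ x', qt (x', y) := fun y x =>
        div_pos (hqtpos _) (sum_pos (fun _ _ => hqtpos _) univ_nonempty)
      rw [FtildeS3_eq_coe_FtildeS3Real _ _ _ _ _ hqtpos hrpos,
        FtildeS3_eq_coe_FtildeS3Real _ _ _ _ _ hqtpos hpost]
      exact_mod_cast FtildeS3Real_le_posterior α pYX pX qt r hqtpos hr hrpos
    · push Not at hrpos
      obtain ⟨y, x, hle⟩ := hrpos
      rw [FtildeS3_eq_bot α pYX pX qt r hqtpos (le_antisymm hle ((hr y).1 x))]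
      exact bot_le
  · rw [FtildeS3_eq_coe_FtildeS3Real _ _ _ _ _ hqtpos hrpos,
      FtildeS3_eq_coe_FtildeS3Real _ _ _ _ _ hqtpos hrpos]
    exact_mod_cast FtildeS3Real_le_marginal α pYX pX qt r hα hqt hpX hpXpos
  · have hw := tiltedWeight_pos α hpYXpos hpXpos hrpos
    have hS : 0 < ∑ w, tiltedWeight α pYX pX r w := sum_pos (fun w _ => hw w) univ_nonempty
    calc FtildeS3 α pYX pX qt r = FtildeS3Real α pYX pX qt r :=
          FtildeS3_eq_coe_FtildeS3Real _ _ _ _ _ hqtpos hrpos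
      _ ≤ FtildeS3Real α pYX pX
            (fun z => tiltedWeight α pYX pX r z / ∑ w, tiltedWeight α pYX pX r w) r := by
          exact_mod_cast FtildeS3Real_le_tilted α pYX pX qt r hα hpYXpos hpXpos hrpos hqt hqtpos
      _ = _ := (FtildeS3_eq_coe_FtildeS3Real _ _ _ _ _ (fun z => div_pos (hw z) hS) hrpos).symm

/-- Alternating-maximization updating formulae for `F̃_α^{S3}` when `α > 1`:
(1) for fixed `(p_X, q̃_{X,Y})`, the maximizing reverse channel is the posterior of
`q̃_{X,Y}`; (2) for fixed `(q̃_{X,Y}, r_{X|Y})` with `r` strictly positive, the maximizing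
strictly positive `p_X` is the `X`-marginal of `q̃_{X,Y}`; (3) for fixed `(p_X, r_{X|Y})`
with `r` strictly positive, the maximizing strictly positive `q̃_{X,Y}` is
`q̃*(x,y) ∝ p_X(x)^{1/α} p_{Y|X}(y|x) r(x|y)^{1−1/α}`. -/
theorem FtildeS3_max_updates {X Y : Type*} [Fintype X] [Fintype Y] [Nonempty X] [Nonempty Y]
    (α : ℝ) (hα : 1 < α)
    (pYX : X → Y → ℝ) (hpYX : ∀ x, IsPMF (pYX x)) (hpYXpos : ∀ x y, 0 < pYX x y) :
    (∀ pX : X → ℝ, IsPMF pX → (∀ x, 0 < pX x) →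
      ∀ qt : X × Y → ℝ, IsPMF qt → (∀ z, 0 < qt z) →
      ∀ r : Y → X → ℝ, (∀ y, IsPMF (r y)) →
        FtildeS3 α pYX pX qt r ≤
        FtildeS3 α pYX pX qt (fun y x => qt (x, y) / ∑ x', qt (x', y))) ∧
    (∀ qt : X × Y → ℝ, IsPMF qt → (∀ z, 0 < qt z) →
      ∀ r : Y → X → ℝ, (∀ y, IsPMF (r y)) → (∀ y x, 0 < r y x) →
      ∀ pX : X → ℝ, IsPMF pX → (∀ x, 0 < pX x) →
        FtildeS3 α pYX pX qt r ≤
        FtildeS3 α pYX (fun x => ∑ y, qt (x, y)) qt r) ∧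
    (∀ pX : X → ℝ, IsPMF pX → (∀ x, 0 < pX x) →
      ∀ r : Y → X → ℝ, (∀ y, IsPMF (r y)) → (∀ y x, 0 < r y x) →
      ∀ qt : X × Y → ℝ, IsPMF qt → (∀ z, 0 < qt z) →
        FtildeS3 α pYX pX qt r ≤
        FtildeS3 α pYX pX
          (fun z : X × Y =>
            pX z.1 ^ (1 / α) * pYX z.1 z.2 * r z.2 z.1 ^ (1 - 1 / α) /
              ∑ w : X × Y, pX w.1 ^ (1 / α) * pYX w.1 w.2 * r w.2 w.1 ^ (1 - 1 / α)) r) :=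
  FtildeS3_max_updates_general α hα pYX hpYXpos
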